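/- arXiv:math/9812171 — 4 statements merged into one kernel-verified Lean document; each statement's English description precedes it below -/
import Mathlib

section
/- Let ∂ : ℤ^{Σ'} → ℤ^{Σ} be a ℤ-linear map between free abelian groups with finite bases Σ' and Σ, given by an integer matrix (n_{σσ'}). Set a = min(card Σ', card Σ) and b = max(1, sup over σ ∈ Σ' of (∑_{σ'∈Σ} n_{σσ'}²)^{1/2}). Then the cardinality of the torsion subgroup of the cokernel of ∂ is at most b^a. -/
open scoped Matrix


lemma natAbs_finset_prod {α : Type*} (s : Finset α) (f : α → ℤ) :
    (∏ i ∈ s, f i).natAbs = ∏ i ∈ s, (f i).natAbs := by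
  induction s using Finset.cons_induction with
  | empty => simp
  | cons a s ha ih => rw [Finset.prod_cons, Finset.prod_cons, Int.natAbs_mul, ih]

lemma cardQuot_toAddSubgroup {M : Type*} [AddCommGroup M] (P : Submodule ℤ M) :
    Nat.card (M ⧸ P) = P.toAddSubgroup.index := by
  rw [AddSubgroup.index_eq_card]; rfl

lemma index_span_cols {ι : Type*} [Fintype ι] [DecidableEq ι] (A : Matrix ι ι ℤ)
    (hA : A.det ≠ 0) :
    Nat.card ((ι → ℤ) ⧸ Submodule.span ℤ (Set.range Aᵀ)) = A.det.natAbs := by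
  classical
  have hinj : Function.Injective A.mulVecLin := by
    rw [← LinearMap.ker_eq_bot, LinearMap.ker_eq_bot']
    intro v hv
    exact Matrix.eq_zero_of_mulVec_eq_zero hA hv
  set N : Submodule ℤ (ι → ℤ) := LinearMap.range A.mulVecLin with hN
  have hspan : Submodule.span ℤ (Set.range Aᵀ) = N := (Matrix.range_mulVecLin A).symm
  rw [hspan]
  let e1 : (ι → ℤ) ≃ₗ[ℤ] N := LinearEquiv.ofInjective A.mulVecLin hinj
  obtain ⟨m, snf⟩ := N.smithNormalForm (Pi.basisFun ℤ ι)
  have hm : m = Fintype.card ι := by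
    have : Fintype.card (Fin m) = Fintype.card ι :=
      Fintype.card_congr (snf.bN.indexEquiv ((Pi.basisFun ℤ ι).map e1))
    simpa using this
  have hidx : Nat.card ((ι → ℤ) ⧸ N) = ∏ i : Fin m, (snf.a i).natAbs := by
    rw [cardQuot_toAddSubgroup, snf.toAddSubgroup_index_eq_ite, if_pos hm]
    simp [Ideal.span_singleton_toAddSubgroup_eq_zmultiples, Int.index_zmultiples]
  rw [hidx]
  let eb : Fin m ≃ ι := Fintype.equivOfCardEq (by simp [hm])
  let b2 : Module.Basis ι ℤ N := snf.bN.reindex eb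
  let φ2 : (ι → ℤ) →ₗ[ℤ] (ι → ℤ) := N.subtype ∘ₗ (b2.equivFun.symm : (ι → ℤ) →ₗ[ℤ] N)
  let g : (ι → ℤ) ≃ₗ[ℤ] (ι → ℤ) := e1 ≪≫ₗ b2.equivFun
  have hAg : A.mulVecLin = φ2 ∘ₗ (g : (ι → ℤ) →ₗ[ℤ] (ι → ℤ)) := by
    apply LinearMap.ext
    intro v
    show A.mulVecLin v = φ2 (g v)
    simp only [φ2, g, LinearEquiv.trans_apply, LinearMap.comp_apply, LinearEquiv.coe_coe]
    rw [LinearEquiv.symm_apply_apply]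
    rfl
  have hdetA : LinearMap.det A.mulVecLin = A.det := by
    rw [show A.mulVecLin = Matrix.toLin' A from rfl, LinearMap.det_toLin']
  let σ : Equiv.Perm ι := Equiv.ofBijective (fun x => snf.f (eb.symm x))
    (Finite.injective_iff_bijective.mp (fun x y h => by
      simpa using eb.symm.injective (snf.f.injective h)))
  let BM : Matrix ι ι ℤ := (Pi.basisFun ℤ ι).toMatrix ⇑snf.bM
  have hφ2mat : LinearMap.toMatrix (Pi.basisFun ℤ ι) (Pi.basisFun ℤ ι) φ2
      = (BM.submatrix id ⇑σ) * Matrix.diagonal (fun x => snf.a (eb.symm x)) := by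
    ext y x
    have hb2 : (b2.equivFun.symm (Pi.single x 1) : ι → ℤ)
        = (snf.a (eb.symm x)) • (snf.bM (snf.f (eb.symm x))) := by
      have h1 : b2.equivFun.symm (Pi.single x 1) = b2 x := by
        rw [Module.Basis.equivFun_symm_apply]
        rw [Finset.sum_eq_single x (by intro k _ hk; simp [Pi.single_apply, hk]) (by simp)]
        simp
      rw [h1]
      have h2 : b2 x = snf.bN (eb.symm x) := by simp [b2]
      rw [h2, snf.snf (eb.symm x)]
    rw [LinearMap.toMatrix_apply, Pi.basisFun_apply]
    simp only [φ2, LinearMap.comp_apply, LinearEquiv.coe_coe, Submodule.coe_subtype]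
    rw [hb2]
    simp only [Pi.basisFun_repr, Pi.smul_apply, smul_eq_mul]
    simp only [Matrix.mul_apply, Matrix.diagonal_apply, Matrix.submatrix_apply, id_eq]
    rw [Finset.sum_eq_single x (by intro k _ hk; simp [hk]) (by simp)]
    rw [if_pos rfl, mul_comm]
    congr 1
  have hdetφ2 : (LinearMap.det φ2).natAbs = ∏ i : Fin m, (snf.a i).natAbs := by
    rw [← LinearMap.det_toMatrix (Pi.basisFun ℤ ι), hφ2mat, Matrix.det_mul,
      Matrix.det_diagonal]
    have hsub := Matrix.det_permute' σ BM
    rw [hsub]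
    have hBM : BM.det.natAbs = 1 := by
      have : IsUnit BM.det := (Pi.basisFun ℤ ι).isUnit_det snf.bM
      rcases Int.isUnit_iff.mp this with h | h <;> simp [BM] at h ⊢ <;> simp [h]
    rw [Int.natAbs_mul, Int.natAbs_mul, hBM, mul_one]
    rcases Int.units_eq_one_or (Equiv.Perm.sign σ) with h | h <;> rw [h] <;>
      simp only [Units.val_one, Units.val_neg, Int.natAbs_one, Int.natAbs_neg, one_mul] <;>
      rw [natAbs_finset_prod] <;>
      simpa using Equiv.prod_comp eb.symm (fun i => (snf.a i).natAbs)
  have hfin : A.det.natAbs = (LinearMap.det φ2).natAbs := by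
    rw [← hdetA, hAg, LinearMap.det_comp, Int.natAbs_mul,
      (by rcases Int.isUnit_iff.mp (LinearEquiv.isUnit_det' g) with h | h <;> simp [h] :
        (LinearMap.det (g : (ι → ℤ) →ₗ[ℤ] (ι → ℤ))).natAbs = 1), mul_one]
  rw [hfin, hdetφ2]

lemma hadamard_fin {r : ℕ} (A : Matrix (Fin r) (Fin r) ℝ) :
    |A.det| ≤ ∏ x, Real.sqrt (∑ y, A y x ^ 2) := by
  classical
  haveI : WellFoundedLT (Fin r) := inferInstance
  let E := EuclideanSpace ℝ (Fin r)
  let f : Fin r → E := fun x => WithLp.toLp 2 (fun y => A y x)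
  have hr : Module.finrank ℝ E = Fintype.card (Fin r) := by
    simp [E, finrank_euclideanSpace_fin]
  let B : OrthonormalBasis (Fin r) ℝ E := InnerProductSpace.gramSchmidtOrthonormalBasis hr f
  have hdet := InnerProductSpace.gramSchmidtOrthonormalBasis_det hr f
  -- relate A.det to B.toBasis.det f
  let std := EuclideanSpace.basisFun (Fin r) ℝ
  have h1 : B.toBasis.det f = B.toBasis.det ⇑std.toBasis * std.toBasis.det f := by
    rw [Module.Basis.det_apply, Module.Basis.det_apply, Module.Basis.det_apply,
      ← Matrix.det_mul, Module.Basis.toMatrix_mul_toMatrix]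
  have h2 : std.toBasis.det f = A.det := by
    rw [Module.Basis.det_apply]
    congr 1
  have h3 : |B.toBasis.det ⇑std.toBasis| = 1 := by
    have h := OrthonormalBasis.det_to_matrix_orthonormalBasis B std
    rwa [Real.norm_eq_abs] at h
  have h4 : |A.det| = |B.toBasis.det f| := by
    rw [h1, abs_mul, h3, one_mul, h2]
  rw [h4, hdet]
  calc |∏ i, (inner ℝ (B i) (f i) : ℝ)| = ∏ i, |(inner ℝ (B i) (f i) : ℝ)| := by
        rw [Finset.abs_prod]
    _ ≤ ∏ i, ‖f i‖ := by
        apply Finset.prod_le_prod (fun i _ => abs_nonneg _)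
        intro i _
        have := abs_real_inner_le_norm (B i) (f i)
        simpa [B.orthonormal.1 i] using this
    _ = ∏ x, Real.sqrt (∑ y, A y x ^ 2) := by
        apply Finset.prod_congr rfl
        intro x _
        rw [EuclideanSpace.norm_eq]
        congr 1
        apply Finset.sum_congr rfl
        intro y _
        rw [Real.norm_eq_abs, sq_abs]

lemma hadamard {ι : Type*} [Fintype ι] [DecidableEq ι] (A : Matrix ι ι ℝ) :
    |A.det| ≤ ∏ x, Real.sqrt (∑ y, A y x ^ 2) := by
  classical
  let eqv : Fin (Fintype.card ι) ≃ ι := (Fintype.equivFin ι).symm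
  rw [← Matrix.det_submatrix_equiv_self eqv A]
  refine le_trans (hadamard_fin (A.submatrix ⇑eqv ⇑eqv)) (le_of_eq ?_)
  rw [← Equiv.prod_comp eqv (fun x => Real.sqrt (∑ y, A y x ^ 2))]
  apply Finset.prod_congr rfl
  intro x _
  congr 1
  rw [← Equiv.sum_comp eqv (fun y => A y (eqv x) ^ 2)]
  rfl

lemma card_quot_dvd_of_le {M : Type*} [AddCommGroup M]
    {A B : Submodule ℤ M} (h : A ≤ B) :
    Nat.card (M ⧸ B) ∣ Nat.card (M ⧸ A) := by
  have e := Submodule.quotientQuotientEquivQuotient A B h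
  rw [← Nat.card_congr e.toEquiv]
  have key := AddSubgroup.card_eq_card_quotient_mul_card_addSubgroup
    (Submodule.map A.mkQ B).toAddSubgroup (α := M ⧸ A)
  exact ⟨_, key⟩

lemma card_quot_ker_dvd {M P : Type*} [AddCommGroup M] [AddCommGroup P]
    (f : M →ₗ[ℤ] P) :
    Nat.card (M ⧸ LinearMap.ker f) ∣ Nat.card P := by
  rw [Nat.card_congr f.quotKerEquivRange.toEquiv]
  exact AddSubgroup.card_addSubgroup_dvd_card (LinearMap.range f).toAddSubgroup

open scoped BigOperators

theorem stmt_1 {S' S : Type*} [Fintype S'] [Fintype S] [DecidableEq S']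
    (n : S' → S → ℤ)
    (d : (S' → ℤ) →ₗ[ℤ] (S → ℤ))
    (hd : ∀ σ : S', d (Pi.single σ 1) = n σ)
    (a : ℕ) (ha : a = min (Fintype.card S') (Fintype.card S))
    (b : ℝ) (hb : b = max 1 (⨆ σ : S', Real.sqrt (∑ σ', (n σ σ' : ℝ) ^ 2))) :
    (Nat.card (Submodule.torsion ℤ ((S → ℤ) ⧸ LinearMap.range d)) : ℝ) ≤ b ^ a := by
  classical
  set N : Submodule ℤ (S → ℤ) := LinearMap.range d with hN
  have hb1 : (1 : ℝ) ≤ b := hb ▸ le_max_left _ _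
  have hb0 : (0 : ℝ) ≤ b := le_trans zero_le_one hb1
  -- rational columns and a maximal independent subfamily
  set cq : S' → (S → ℚ) := fun j i => (n j i : ℚ) with hcq
  obtain ⟨bset, hsub, hbspan, hbind⟩ := exists_linearIndependent ℚ (Set.range cq)
  haveI : Fintype ↥bset := ((Set.finite_range cq).subset hsub).fintype
  set ι := ↥bset with hι
  let v : ι → (S → ℚ) := Subtype.val
  have hvind : LinearIndependent ℚ v := hbind
  have hg : ∀ x : ι, ∃ j : S', cq j = (x : S → ℚ) := fun x => hsub x.2
  let g : ι → S' := fun x => (hg x).choose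
  have hgspec : ∀ x : ι, cq (g x) = (x : S → ℚ) := fun x => (hg x).choose_spec
  have hginj : Function.Injective g := fun x y h =>
    Subtype.ext (by rw [← hgspec x, ← hgspec y, h])
  -- rows span everything
  let ρ : S → (ι → ℚ) := fun i x => v x i
  let Mv : Matrix S ι ℚ := Matrix.of ρ
  have hrank1 : Mv.rank = Fintype.card ι := by
    rw [Matrix.rank_eq_finrank_span_cols]
    have hre : Set.range Mvᵀ = Set.range v := by
      ext w
      constructor
      · rintro ⟨x, rfl⟩; exact ⟨x, rfl⟩
      · rintro ⟨x, rfl⟩; exact ⟨x, rfl⟩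
    rw [show Set.range Mv.col = Set.range v from hre, finrank_span_eq_card hvind]
  have hspanrows : Submodule.span ℚ (Set.range ρ) = ⊤ := by
    apply Submodule.eq_top_of_finrank_eq
    have h1 : Mvᵀ.rank = Fintype.card ι := by rw [Matrix.rank_transpose, hrank1]
    have h2 : Mvᵀ.rank = Module.finrank ℚ (Submodule.span ℚ (Set.range ρ)) :=
      Matrix.rank_eq_finrank_span_cols _
    rw [← h2, h1, Module.finrank_fintype_fun_eq_card]
  obtain ⟨rset, hrsub, hrspan, hrind⟩ := exists_linearIndependent ℚ (Set.range ρ)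
  haveI : Fintype ↥rset := ((Set.finite_range ρ).subset hrsub).fintype
  have hrtop : Submodule.span ℚ rset = ⊤ := by rw [hrspan, hspanrows]
  let Br : Module.Basis ↥rset ℚ (ι → ℚ) := Module.Basis.mk hrind
    (by rw [Subtype.range_coe, hrtop])
  have hcard_rset : Fintype.card ι = Fintype.card ↥rset := by
    have h1 := Module.finrank_eq_card_basis Br
    rw [Module.finrank_fintype_fun_eq_card] at h1
    exact h1
  let τ : ι ≃ ↥rset := Fintype.equivOfCardEq hcard_rset
  have he : ∀ y : ι, ∃ i : S, ρ i = ((τ y : ι → ℚ)) := fun y => hrsub (τ y).2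
  let e : ι → S := fun y => (he y).choose
  have hespec : ∀ y, ρ (e y) = ((τ y : ι → ℚ)) := fun y => (he y).choose_spec
  have heinj : Function.Injective e := fun y z h =>
    τ.injective (Subtype.ext (by rw [← hespec y, ← hespec z, h]))
  -- the key square matrix
  let R : Matrix ι ι ℚ := Matrix.of fun y x => v x (e y)
  have hRrows : ∀ y, R y = ((τ y : ι → ℚ)) := fun y => hespec y
  have hRdet : R.det ≠ 0 := by
    have hwind : LinearIndependent ℚ (fun y : ι => R y) := by
      have : (fun y : ι => R y) = (Subtype.val ∘ τ) := funext hRrows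
      rw [this]
      exact hrind.comp τ τ.injective
    have hwspan : Submodule.span ℚ (Set.range (fun y : ι => R y)) = ⊤ := by
      have : Set.range (fun y : ι => R y) = rset := by
        rw [funext hRrows]
        ext w
        constructor
        · rintro ⟨y, rfl⟩; exact (τ y).2
        · intro hw; exact ⟨τ.symm ⟨w, hw⟩, by simp⟩
      rw [this, hrtop]
    have hunit := ((Pi.basisFun ℚ ι).is_basis_iff_det).mp ⟨hwind, hwspan⟩
    rw [Module.Basis.det_apply] at hunit
    have hmat : (Pi.basisFun ℚ ι).toMatrix (fun y => R y) = Rᵀ := by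
      ext i j
      rw [Module.Basis.toMatrix_apply, Pi.basisFun_repr]
      rfl
    rw [hmat, Matrix.det_transpose] at hunit
    exact hunit.ne_zero
  let Rz : Matrix ι ι ℤ := Matrix.of fun y x => n (g x) (e y)
  have hcast : ∀ y x, ((Rz y x : ℤ) : ℚ) = R y x := by
    intro y x
    exact congrFun (hgspec x) (e y)
  have hRz : Rz.det ≠ 0 := by
    intro h0
    apply hRdet
    have : ((Int.castRingHom ℚ)).mapMatrix Rz = R := by
      ext y x
      exact hcast y x
    rw [← this, ← RingHom.map_det, h0, map_zero]
  -- projection to chosen coordinates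
  let π : (S → ℤ) →ₗ[ℤ] (ι → ℤ) := LinearMap.funLeft ℤ ℤ e
  let castq : (S → ℤ) →ₗ[ℤ] (S → ℚ) :=
    LinearMap.pi (fun i => (Int.castAddHom ℚ).toIntLinearMap.comp (LinearMap.proj i))
  have hcastq : ∀ (x : S → ℤ) (i : S), castq x i = (x i : ℚ) := fun x i => rfl
  -- membership of columns
  have hcol : ∀ j : S', n j ∈ N := fun j => ⟨Pi.single j 1, hd j⟩
  have hcastN : ∀ w ∈ N, castq w ∈ Submodule.span ℚ (Set.range v) := by
    intro w hw
    have hNspan : N ≤ Submodule.span ℤ (Set.range n) := by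
      rintro _ ⟨x, rfl⟩
      have hx : d x = ∑ j, x j • n j := by
        have hxe : x = ∑ j, x j • Pi.single j 1 := by
          ext i
          simp [Pi.single_apply]
        conv_lhs => rw [hxe]
        rw [map_sum]
        exact Finset.sum_congr rfl (fun j _ => by rw [map_smul, hd])
      rw [hx]
      exact Submodule.sum_mem _ (fun j _ =>
        Submodule.smul_mem _ _ (Submodule.subset_span ⟨j, rfl⟩))
    have hw2 := hNspan hw
    clear hw
    have hspan2 : Submodule.span ℚ (Set.range v) = Submodule.span ℚ (Set.range cq) := by
      rw [show Set.range v = bset from Subtype.range_coe, hbspan]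
    rw [hspan2]
    -- push through the span
    induction hw2 using Submodule.span_induction with
    | mem y hy =>
      obtain ⟨j, rfl⟩ := hy
      apply Submodule.subset_span
      refine ⟨j, ?_⟩
      ext i
      rw [hcastq]
    | zero =>
      rw [map_zero]
      exact Submodule.zero_mem _
    | add p q _ _ hp hq =>
      rw [map_add]
      exact Submodule.add_mem _ hp hq
    | smul c p _ hp =>
      rw [map_smul]
      exact Submodule.smul_of_tower_mem _ c hp
  -- injectivity of π on K
  set T : Submodule ℤ ((S → ℤ) ⧸ N) := Submodule.torsion ℤ ((S → ℤ) ⧸ N) with hT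
  set K : Submodule ℤ (S → ℤ) := Submodule.comap N.mkQ T with hK
  have hNK : N ≤ K := by
    intro x hx
    show N.mkQ x ∈ T
    have : N.mkQ x = 0 := by
      rw [Submodule.mkQ_apply, Submodule.Quotient.mk_eq_zero]
      exact hx
    rw [this]
    exact Submodule.zero_mem _
  have hπinjK : ∀ x ∈ K, π x = 0 → x = 0 := by
    intro x hxK hπx
    obtain ⟨k, hk⟩ := (Submodule.mem_torsion_iff _).mp hxK
    have hkx : (k : ℤ) • x ∈ N := by
      have : N.mkQ ((k : ℤ) • x) = 0 := by
        rw [map_smul]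
        exact hk
      rwa [Submodule.mkQ_apply, Submodule.Quotient.mk_eq_zero] at this
    have hmem := hcastN _ hkx
    obtain ⟨c, hc⟩ := (Submodule.mem_span_range_iff_exists_fun ℚ).mp hmem
    have hcoord : ∀ y : ι, ((k : ℤ) • x) (e y) = 0 := by
      intro y
      have hxy : x (e y) = 0 := congrFun hπx y
      simp [hxy]
    have hmv : R.mulVec c = 0 := by
      funext y
      have h := congrFun hc (e y)
      simp only [Finset.sum_apply, Pi.smul_apply, smul_eq_mul] at h
      have h2 : ∑ x', c x' * v x' (e y) = 0 := by
        rw [h, hcastq, hcoord y, Int.cast_zero]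
      show ∑ x', R y x' * c x' = 0
      rw [Finset.sum_congr rfl (fun x' _ => mul_comm (R y x') (c x'))]
      exact h2
    have hc0 : c = 0 := Matrix.eq_zero_of_mulVec_eq_zero hRdet hmv
    have hcast0 : castq ((k : ℤ) • x) = 0 := by
      rw [← hc, hc0]
      simp
    have hkx0 : (k : ℤ) • x = 0 := by
      funext i
      have h := congrFun hcast0 i
      rw [hcastq] at h
      simp only [Pi.zero_apply] at h ⊢
      exact_mod_cast h
    have hk0 : (k : ℤ) ≠ 0 := nonZeroDivisors.coe_ne_zero k
    funext i
    have := congrFun hkx0 i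
    simp only [Pi.smul_apply, smul_eq_mul, Pi.zero_apply] at this
    rcases mul_eq_zero.mp this with h | h
    · exact absurd h hk0
    · exact h
  -- the quotient isomorphisms
  let ψ : ↥K →ₗ[ℤ] ↥T := LinearMap.codRestrict T (N.mkQ ∘ₗ K.subtype) (fun x => x.2)
  have hψsurj : Function.Surjective ψ := by
    rintro ⟨t, ht⟩
    obtain ⟨x, hx⟩ := N.mkQ_surjective t
    refine ⟨⟨x, ?_⟩, ?_⟩
    · show N.mkQ x ∈ T
      rw [hx]; exact ht
    · apply Subtype.ext
      exact hx
  have hψker : LinearMap.ker ψ = Submodule.comap K.subtype N := by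
    ext x
    rw [LinearMap.mem_ker, Submodule.mem_comap]
    constructor
    · intro h
      have h2 : N.mkQ x.1 = 0 := congrArg Subtype.val h
      rwa [Submodule.mkQ_apply, Submodule.Quotient.mk_eq_zero] at h2
    · intro h
      apply Subtype.ext
      show N.mkQ x.1 = 0
      rwa [Submodule.mkQ_apply, Submodule.Quotient.mk_eq_zero]
  have hcard1 : Nat.card ↥T = Nat.card (↥K ⧸ Submodule.comap K.subtype N) := by
    rw [← hψker]
    exact (Nat.card_congr (ψ.quotKerEquivOfSurjective hψsurj).toEquiv).symm
  -- transport along π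
  let f0 : ↥K →ₗ[ℤ] (ι → ℤ) := π ∘ₗ K.subtype
  have hf0inj : Function.Injective f0 := by
    rw [← LinearMap.ker_eq_bot, LinearMap.ker_eq_bot']
    intro x hx
    apply Subtype.ext
    exact hπinjK x.1 x.2 hx
  have hrangef0 : LinearMap.range f0 = K.map π := by
    rw [show f0 = π ∘ₗ K.subtype from rfl, LinearMap.range_comp, Submodule.range_subtype]
  let eK : ↥K ≃ₗ[ℤ] ↥(K.map π) :=
    (LinearEquiv.ofInjective f0 hf0inj).trans (LinearEquiv.ofEq _ _ hrangef0)
  have heKcoe : ∀ x : ↥K, ((eK x : ↥(K.map π)) : ι → ℤ) = π x.1 := by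
    intro x
    rfl
  have hmap : (Submodule.comap K.subtype N).map (eK : ↥K →ₗ[ℤ] ↥(K.map π))
      = Submodule.comap (K.map π).subtype (N.map π) := by
    apply le_antisymm
    · rintro _ ⟨x, hx, rfl⟩
      rw [Submodule.mem_comap, Submodule.subtype_apply, LinearEquiv.coe_coe, heKcoe]
      exact ⟨x.1, hx, rfl⟩
    · rintro y hy
      rw [Submodule.mem_comap] at hy
      obtain ⟨w, hw, hwy⟩ := hy
      refine ⟨⟨w, hNK hw⟩, hw, ?_⟩
      apply Subtype.ext
      rw [LinearEquiv.coe_coe, heKcoe]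
      exact hwy
  have hcard2 : Nat.card (↥K ⧸ Submodule.comap K.subtype N)
      = Nat.card (↥(K.map π) ⧸ Submodule.comap (K.map π).subtype (N.map π)) :=
    Nat.card_congr (Submodule.Quotient.equiv _ _ eK hmap).toEquiv
  -- the lattice L
  set L : Submodule ℤ (ι → ℤ) := Submodule.span ℤ (Set.range Rzᵀ) with hL
  have hLle : L ≤ N.map π := by
    rw [hL, Submodule.span_le]
    rintro _ ⟨x, rfl⟩
    refine ⟨n (g x), hcol (g x), ?_⟩
    rfl
  have dvd1 : Nat.card (↥(K.map π) ⧸ Submodule.comap (K.map π).subtype (N.map π))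
      ∣ Nat.card (↥(K.map π) ⧸ Submodule.comap (K.map π).subtype L) :=
    card_quot_dvd_of_le (Submodule.comap_mono hLle)
  let f1 : ↥(K.map π) →ₗ[ℤ] ((ι → ℤ) ⧸ L) := L.mkQ ∘ₗ (K.map π).subtype
  have hker1 : LinearMap.ker f1 = Submodule.comap (K.map π).subtype L := by
    ext x
    rw [LinearMap.mem_ker, Submodule.mem_comap]
    show L.mkQ x.1 = 0 ↔ _
    rw [Submodule.mkQ_apply, Submodule.Quotient.mk_eq_zero]
    rfl
  have dvd2 : Nat.card (↥(K.map π) ⧸ Submodule.comap (K.map π).subtype L)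
      ∣ Nat.card ((ι → ℤ) ⧸ L) := by
    rw [← hker1]
    exact card_quot_ker_dvd f1
  have hcardL : Nat.card ((ι → ℤ) ⧸ L) = Rz.det.natAbs := index_span_cols Rz hRz
  have hdvd : Nat.card ↥T ∣ Rz.det.natAbs := by
    rw [← hcardL, hcard1, hcard2]
    exact dvd_trans dvd1 dvd2
  have hTle : Nat.card ↥T ≤ Rz.det.natAbs :=
    Nat.le_of_dvd (Nat.pos_of_ne_zero (by simpa using hRz)) hdvd
  -- numeric estimate
  have hcardlea : Fintype.card ι ≤ a := by
    rw [ha]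
    exact le_min (Fintype.card_le_of_injective g hginj)
      (Fintype.card_le_of_injective e heinj)
  let Rr : Matrix ι ι ℝ := (Int.castRingHom ℝ).mapMatrix Rz
  have hRr : |Rr.det| ≤ ∏ x, Real.sqrt (∑ y, (Rr y x) ^ 2) := hadamard Rr
  have hcol_le : ∀ x : ι, Real.sqrt (∑ y, (Rr y x) ^ 2) ≤ b := by
    intro x
    have h1 : ∑ y, (Rr y x) ^ 2 ≤ ∑ σ', ((n (g x) σ' : ℝ)) ^ 2 := by
      have heq : ∑ y, (Rr y x) ^ 2
          = ∑ σ' ∈ Finset.univ.image e, ((n (g x) σ' : ℝ)) ^ 2 := by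
        rw [Finset.sum_image (fun p _ q _ h => heinj h)]
        rfl
      rw [heq]
      apply Finset.sum_le_sum_of_subset_of_nonneg (Finset.subset_univ _)
      intro i _ _
      positivity
    have h2 : Real.sqrt (∑ y, (Rr y x) ^ 2)
        ≤ Real.sqrt (∑ σ', ((n (g x) σ' : ℝ)) ^ 2) := Real.sqrt_le_sqrt h1
    refine le_trans h2 ?_
    refine le_trans (le_ciSup (f := fun σ : S' => Real.sqrt (∑ σ', ((n σ σ' : ℝ)) ^ 2))
      (Set.Finite.bddAbove (Set.finite_range _)) (g x)) ?_
    rw [hb]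
    exact le_max_right _ _
  have habs : (Rz.det.natAbs : ℝ) = |Rr.det| := by
    have hdet' : Rr.det = ((Rz.det : ℤ) : ℝ) := by
      rw [show Rr = (Int.castRingHom ℝ).mapMatrix Rz from rfl, ← RingHom.map_det]
      rfl
    rw [hdet', Nat.cast_natAbs, Int.cast_abs]
  calc (Nat.card ↥T : ℝ) ≤ (Rz.det.natAbs : ℝ) := by exact_mod_cast hTle
    _ = |Rr.det| := habs
    _ ≤ ∏ x, Real.sqrt (∑ y, (Rr y x) ^ 2) := hRr
    _ ≤ ∏ _x : ι, b := Finset.prod_le_prod (fun _ _ => Real.sqrt_nonneg _)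
        (fun x _ => hcol_le x)
    _ = b ^ (Fintype.card ι) := by rw [Finset.prod_const, Finset.card_univ]
    _ ≤ b ^ a := pow_le_pow_right₀ hb1 hcardlea
end

section
/- For every positive definite real N×N symmetric matrix A, the number of vectors v ∈ ℤ^N \ {0} achieving the minimum value μ(A) = min{vᵀAv : v ∈ ℤ^N, v ≠ 0} is at most 2(2^N − 1). -/
open scoped Matrix

section Aux

variable {N : ℕ} (A : Matrix (Fin N) (Fin N) ℝ)

private lemma aux_cast_ne {v : Fin N → ℤ} (hv : v ≠ 0) :
    (fun i => (v i : ℝ)) ≠ 0 := by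
  intro h
  apply hv
  funext i
  have := congrFun h i
  simp only [Pi.zero_apply] at this
  exact_mod_cast this

private lemma aux_Q_smul (c : ℝ) (x : Fin N → ℝ) :
    (c • x) ⬝ᵥ A.mulVec (c • x) = c ^ 2 * (x ⬝ᵥ A.mulVec x) := by
  simp [Matrix.mulVec_smul, smul_eq_mul]
  ring

private lemma aux_par (x y : Fin N → ℝ) :
    (x + y) ⬝ᵥ A.mulVec (x + y) + (x - y) ⬝ᵥ A.mulVec (x - y) =
      2 * (x ⬝ᵥ A.mulVec x) + 2 * (y ⬝ᵥ A.mulVec y) := by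
  simp [Matrix.mulVec_add, Matrix.mulVec_sub, dotProduct_add, dotProduct_sub,
    add_dotProduct, sub_dotProduct]
  ring

end Aux

theorem stmt_6 {N : ℕ} (A : Matrix (Fin N) (Fin N) ℝ) (hA : A.PosDef) (μ : ℝ)
    (hμ : IsLeast {r : ℝ | ∃ v : Fin N → ℤ, v ≠ 0 ∧
      (fun i => (v i : ℝ)) ⬝ᵥ A.mulVec (fun i => (v i : ℝ)) = r} μ) :
    Nat.card {v : Fin N → ℤ // v ≠ 0 ∧
      (fun i => (v i : ℝ)) ⬝ᵥ A.mulVec (fun i => (v i : ℝ)) = μ} ≤ 2 * (2 ^ N - 1) := by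
  classical
  set c : (Fin N → ℤ) → (Fin N → ℝ) := fun v i => (v i : ℝ) with hc
  set Q : (Fin N → ℝ) → ℝ := fun x => x ⬝ᵥ A.mulVec x with hQ
  -- μ > 0
  obtain ⟨v₀, hv₀, hv₀Q⟩ := hμ.1
  have hstar : ∀ x : Fin N → ℝ, star x = x := fun x => by
    funext i; simp
  have hμpos : 0 < μ := by
    have := hA.dotProduct_mulVec_pos (aux_cast_ne hv₀)
    rw [hstar] at this
    rw [← hv₀Q]
    exact this
  have hlb : ∀ u : Fin N → ℤ, u ≠ 0 → μ ≤ Q (c u) := fun u hu =>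
    hμ.2 ⟨u, hu, rfl⟩
  set S : Set (Fin N → ℤ) := {v | v ≠ 0 ∧ Q (c v) = μ} with hS
  -- key lemma A : minimal vectors are nonzero mod 2
  have keyA : ∀ v ∈ S, (fun i => (v i : ZMod 2)) ≠ 0 := by
    rintro v ⟨hv, hvQ⟩ h0
    have hdvd : ∀ i, (2 : ℤ) ∣ v i := by
      intro i
      have := congrFun h0 i
      exact (ZMod.intCast_zmod_eq_zero_iff_dvd _ 2).1 this
    set u : Fin N → ℤ := fun i => v i / 2 with hu
    have huv : ∀ i, 2 * u i = v i := fun i => Int.mul_ediv_cancel' (hdvd i)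
    have hune : u ≠ 0 := by
      intro h
      apply hv; funext i
      have := huv i
      rw [congrFun h i] at this
      simpa using this.symm
    have hcu : c v = (2 : ℝ) • c u := by
      funext i
      have := huv i
      simp only [c, Pi.smul_apply, smul_eq_mul]
      exact_mod_cast this.symm
    have : Q (c v) = 4 * Q (c u) := by
      rw [hcu]; have := aux_Q_smul A (2 : ℝ) (c u); simp only [Q] at *
      rw [this]; norm_num
    have h1 := hlb u hune
    rw [hvQ] at this
    linarith
  -- key lemma B : two minimal vectors congruent mod 2 are equal or opposite
  have keyB : ∀ v ∈ S, ∀ w ∈ S,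
      (fun i => (v i : ZMod 2)) = (fun i => (w i : ZMod 2)) → v = w ∨ v = -w := by
    rintro v ⟨hv, hvQ⟩ w ⟨hw, hwQ⟩ hmod
    by_contra hcon
    push_neg at hcon
    obtain ⟨hne, hnne⟩ := hcon
    have hdvd : ∀ i, (2 : ℤ) ∣ (v i - w i) := by
      intro i
      have := congrFun hmod i
      have : ((v i - w i : ℤ) : ZMod 2) = 0 := by push_cast; rw [this]; ring
      exact (ZMod.intCast_zmod_eq_zero_iff_dvd _ 2).1 this
    have hdvd' : ∀ i, (2 : ℤ) ∣ (v i + w i) := by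
      intro i
      have : v i + w i = (v i - w i) + 2 * w i := by ring
      rw [this]
      exact dvd_add (hdvd i) ⟨w i, rfl⟩
    set u₁ : Fin N → ℤ := fun i => (v i - w i) / 2 with hu₁
    set u₂ : Fin N → ℤ := fun i => (v i + w i) / 2 with hu₂
    have hv₁ : ∀ i, 2 * u₁ i = v i - w i := fun i => Int.mul_ediv_cancel' (hdvd i)
    have hv₂ : ∀ i, 2 * u₂ i = v i + w i := fun i => Int.mul_ediv_cancel' (hdvd' i)
    have hu₁ne : u₁ ≠ 0 := by
      intro h; apply hne; funext i
      have := hv₁ i; rw [congrFun h i] at this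
      simp at this; linarith
    have hu₂ne : u₂ ≠ 0 := by
      intro h; apply hnne; funext i
      have := hv₂ i; rw [congrFun h i] at this
      simp at this; simp; linarith
    have hcu₁ : c v - c w = (2 : ℝ) • c u₁ := by
      funext i
      have := hv₁ i
      simp only [c, Pi.sub_apply, Pi.smul_apply, smul_eq_mul]
      exact_mod_cast this.symm
    have hcu₂ : c v + c w = (2 : ℝ) • c u₂ := by
      funext i
      have := hv₂ i
      simp only [c, Pi.add_apply, Pi.smul_apply, smul_eq_mul]
      exact_mod_cast this.symm
    have hpar := aux_par A (c v) (c w)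
    rw [hcu₁, hcu₂, aux_Q_smul, aux_Q_smul] at hpar
    have h1 := hlb u₁ hu₁ne
    have h2 := hlb u₂ hu₂ne
    simp only [Q] at hvQ hwQ h1 h2
    rw [hvQ, hwQ] at hpar
    nlinarith
  -- counting
  have hcard : Nat.card S ≤ 2 * (2 ^ N - 1) := by
    by_cases hfin : S.Finite
    · rw [Nat.card_coe_set_eq, Set.ncard_eq_toFinset_card S hfin]
      set s := hfin.toFinset with hs'
      have hsm : ∀ v, v ∈ s ↔ v ∈ S := fun v => hfin.mem_toFinset
      set f : (Fin N → ℤ) → (Fin N → ZMod 2) := fun v i => (v i : ZMod 2) with hf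
      have h1 : s.card ≤ 2 * (s.image f).card := by
        apply Finset.card_le_mul_card_image
        intro b hb
        obtain ⟨v, hvs, hvb⟩ := Finset.mem_image.1 hb
        have hsub : {a ∈ s | f a = b} ⊆ {v, -v} := by
          intro w hw
          simp only [Finset.mem_filter] at hw
          obtain ⟨hws, hwb⟩ := hw
          have := keyB w ((hsm w).1 hws) v ((hsm v).1 hvs) (show f w = f v by rw [hwb, hvb])
          simp only [Finset.mem_insert, Finset.mem_singleton]
          rcases this with h | h
          · exact Or.inl h
          · exact Or.inr (by rw [h])
        apply (Finset.card_le_card hsub).trans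
        apply (Finset.card_insert_le _ _).trans
        simp
      have h2 : (s.image f).card ≤ 2 ^ N - 1 := by
        have hsub : s.image f ⊆ Finset.univ.erase 0 := by
          intro b hb
          obtain ⟨v, hvs, hvb⟩ := Finset.mem_image.1 hb
          apply Finset.mem_erase.2
          refine ⟨?_, Finset.mem_univ _⟩
          rw [← hvb]
          exact keyA v ((hsm v).1 hvs)
        apply (Finset.card_le_card hsub).trans
        rw [Finset.card_erase_of_mem (Finset.mem_univ _), Finset.card_univ]
        simp [Fintype.card_fun]
      calc (Set.Finite.toFinset hfin).card ≤ 2 * (s.image f).card := h1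
        _ ≤ 2 * (2 ^ N - 1) := Nat.mul_le_mul_left _ h2
    · rw [Nat.card_coe_set_eq, Set.Infinite.ncard hfin]
      exact Nat.zero_le _
  exact hcard
end

section
/- For every N ≥ 1, the Hermite constant γ(N), defined as the supremum over positive definite real N×N symmetric matrices A of μ(A)·det(A)^{−1/N}, satisfies γ(N) ≤ 1 + N/4. -/
open scoped Matrix
open Real MeasureTheory Module Matrix
open scoped ENNReal


/-- truncated binomial lower bound -/
lemma binom4 (n : ℕ) (t : ℝ) (ht : 0 ≤ t) :
    1 + n*t + n*(n-1)/2*t^2 + n*(n-1)*(n-2)/6*t^3 + n*(n-1)*(n-2)*(n-3)/24*t^4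
      ≤ (1+t)^n := by
  induction n with
  | zero => simp
  | succ n ih =>
    have h4 : 0 ≤ (n:ℝ)*(n-1)*(n-2)*(n-3) := by
      rcases n with _|_|_|_|m
      · norm_num
      · norm_num
      · norm_num
      · norm_num
      · have hm : (0:ℝ) ≤ (m:ℝ) := Nat.cast_nonneg m
        push_cast
        apply mul_nonneg (mul_nonneg (mul_nonneg _ _) _) <;> linarith
    have h1 : (0:ℝ) ≤ 1 + t := by linarith
    calc 1 + (n+1:ℕ)*t + (n+1:ℕ)*((n+1:ℕ)-1)/2*t^2 + (n+1:ℕ)*((n+1:ℕ)-1)*((n+1:ℕ)-2)/6*t^3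
          + (n+1:ℕ)*((n+1:ℕ)-1)*((n+1:ℕ)-2)*((n+1:ℕ)-3)/24*t^4
        ≤ (1+t) * (1 + n*t + n*(n-1)/2*t^2 + n*(n-1)*(n-2)/6*t^3 + n*(n-1)*(n-2)*(n-3)/24*t^4) := by
          push_cast
          nlinarith [mul_nonneg (mul_nonneg h4 ht) (pow_nonneg ht 4), sq_nonneg t]
      _ ≤ (1+t) * (1+t)^n := by
          apply mul_le_mul_of_nonneg_left ih h1
      _ = (1+t)^(n+1) := by ring

lemma step_poly (x p : ℝ) (hx : 1 ≤ x) (hp : 3.141592 ≤ p) :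
    1536*(x+2)^2*(x+4)^4 ≤ p^2*((x+6)^2*(24*(x+4)^4 + 48*x*(x+4)^3 + 48*x*(x-1)*(x+4)^2
      + 32*x*(x-1)*(x-2)*(x+4) + 16*x*(x-1)*(x-2)*(x-3))) := by
  have hu : (0:ℝ) ≤ x - 1 := by linarith
  have hp2 : (9.8696:ℝ) ≤ p^2 := by nlinarith
  have hQ : (0:ℝ) ≤ (x+6)^2*(24*(x+4)^4 + 48*x*(x+4)^3 + 48*x*(x-1)*(x+4)^2
      + 32*x*(x-1)*(x-2)*(x+4) + 16*x*(x-1)*(x-2)*(x-3)) := by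
    nlinarith [pow_nonneg hu 2, pow_nonneg hu 3, pow_nonneg hu 4, pow_nonneg hu 5,
      pow_nonneg hu 6]
  have key : 1536*(x+2)^2*(x+4)^4 ≤ (9.8696:ℝ)*((x+6)^2*(24*(x+4)^4 + 48*x*(x+4)^3
      + 48*x*(x-1)*(x+4)^2 + 32*x*(x-1)*(x-2)*(x+4) + 16*x*(x-1)*(x-2)*(x-3))) := by
    nlinarith [pow_nonneg hu 2, pow_nonneg hu 3, pow_nonneg hu 4, pow_nonneg hu 5,
      pow_nonneg hu 6]
  calc 1536*(x+2)^2*(x+4)^4 ≤ (9.8696:ℝ)*_ := key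
    _ ≤ p^2*_ := mul_le_mul_of_nonneg_right hp2 hQ

lemma keyGamma : ∀ N : ℕ, 1 ≤ N → (Real.Gamma (N/2+1))^2 ≤ (π*(N+4)/16)^N := by
  intro N
  induction N using Nat.strong_induction_on with
  | _ N ih =>
    intro hN
    match N, hN with
    | 1, _ =>
      rw [show ((1:ℕ):ℝ)/2 + 1 = 1/2 + 1 by norm_num, Real.Gamma_add_one (by norm_num),
        Real.Gamma_one_half_eq]
      push_cast
      nlinarith [Real.sq_sqrt pi_pos.le, pi_pos, Real.sqrt_nonneg π]
    | 2, _ =>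
      rw [show ((2:ℕ):ℝ)/2 + 1 = 2 by norm_num, Real.Gamma_two]
      push_cast
      nlinarith [pi_gt_d6]
    | (n+3), _ =>
      have hprev := ih (n+1) (by omega) (by omega)
      set x : ℝ := (n:ℝ) + 1 with hxdef
      have hx : 1 ≤ x := by simp [hxdef]
      have h4 : (0:ℝ) < x + 4 := by linarith
      have ht : (0:ℝ) ≤ 2/(x+4) := by positivity
      have hbin := binom4 (n+1) (2/(x+4)) ht
      have hcast : ((n+1:ℕ):ℝ) = x := by push_cast; ring
      rw [hcast] at hbin
      have hπ : (3.141592:ℝ) ≤ π := pi_gt_d6.le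
      have hπ0 : (0:ℝ) < π := pi_pos
      -- abbreviations
      have ha : (0:ℝ) < π*(x+4)/16 := by positivity
      have hb : (0:ℝ) < π*(x+6)/16 := by positivity
      -- Gamma recursion
      have harg : ((n+3:ℕ):ℝ)/2 + 1 = (x/2 + 1) + 1 := by push_cast; ring
      have hrec : Real.Gamma (((n+3:ℕ):ℝ)/2+1) = (x/2+1) * Real.Gamma (x/2+1) := by
        rw [harg, Real.Gamma_add_one (by positivity)]
      have hprev' : (Real.Gamma (x/2+1))^2 ≤ (π*(x+4)/16)^(n+1) := by
        have : ((n+1:ℕ):ℝ)/2 + 1 = x/2 + 1 := by push_cast; ring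
        rw [this] at hprev
        have : ((n+1:ℕ):ℝ) + 4 = x + 4 := by push_cast; ring
        rwa [this] at hprev
      -- the polynomial value
      set P : ℝ := 1 + x*(2/(x+4)) + x*(x-1)/2*(2/(x+4))^2 + x*(x-1)*(x-2)/6*(2/(x+4))^3
        + x*(x-1)*(x-2)*(x-3)/24*(2/(x+4))^4 with hPdef
      have hb2P : ((x+2)/2)^2 ≤ (π*(x+6)/16)^2 * P := by
        have hsp := step_poly x π hx hπ
        have hne : (x+4) ≠ 0 := ne_of_gt h4
        have h6144 : (0:ℝ) < 6144*(x+4)^4 := by positivity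
        have key : ((x+2)/2)^2 * (6144*(x+4)^4) ≤ ((π*(x+6)/16)^2 * P) * (6144*(x+4)^4) := by
          calc ((x+2)/2)^2 * (6144*(x+4)^4) = 1536*(x+2)^2*(x+4)^4 := by ring
            _ ≤ π^2*((x+6)^2*(24*(x+4)^4 + 48*x*(x+4)^3 + 48*x*(x-1)*(x+4)^2
                + 32*x*(x-1)*(x-2)*(x+4) + 16*x*(x-1)*(x-2)*(x-3))) := hsp
            _ = ((π*(x+6)/16)^2 * P) * (6144*(x+4)^4) := by
                rw [hPdef]; field_simp; ring
        exact le_of_mul_le_mul_right key h6144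
      -- assemble
      have hsplit : (π*((n+3:ℕ)+4)/16)^(n+3)
          = ((π*(x+6)/16)^2 * (1+2/(x+4))^(n+1)) * (π*(x+4)/16)^(n+1) := by
        have h1 : π*(((n+3:ℕ):ℝ)+4)/16 = π*(x+6)/16 := by push_cast; ring
        have h2 : π*(x+6)/16 = (π*(x+4)/16) * (1+2/(x+4)) := by field_simp; ring
        rw [h1, h2, mul_pow ((π*(x+4)/16)) (1+2/(x+4)) (n+3)]
        ring
      have hG2 : (Real.Gamma (((n+3:ℕ):ℝ)/2+1))^2
          = ((x+2)/2)^2 * (Real.Gamma (x/2+1))^2 := by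
        rw [hrec]; ring_nf
      rw [hG2, hsplit]
      have step1 : ((x+2)/2)^2 * (Real.Gamma (x/2+1))^2
          ≤ ((x+2)/2)^2 * (π*(x+4)/16)^(n+1) := by
        apply mul_le_mul_of_nonneg_left hprev' (by positivity)
      have step2 : ((x+2)/2)^2 ≤ (π*(x+6)/16)^2 * (1+2/(x+4))^(n+1) := by
        calc ((x+2)/2)^2 ≤ (π*(x+6)/16)^2 * P := hb2P
          _ ≤ (π*(x+6)/16)^2 * (1+2/(x+4))^(n+1) := by
              apply mul_le_mul_of_nonneg_left _ (by positivity)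
              exact le_trans (le_of_eq (by rw [hPdef])) hbin
      calc ((x+2)/2)^2 * (Real.Gamma (x/2+1))^2
          ≤ ((x+2)/2)^2 * (π*(x+4)/16)^(n+1) := step1
        _ ≤ ((π*(x+6)/16)^2 * (1+2/(x+4))^(n+1)) * (π*(x+4)/16)^(n+1) := by
            apply mul_le_mul_of_nonneg_right step2 (by positivity)


lemma exists_short_vec {N : ℕ} (hN : 1 ≤ N) (A : Matrix (Fin N) (Fin N) ℝ) (hA : A.PosDef)
    (r : ℝ) (hr : 0 < r)
    (hvol : 2^N * Real.sqrt A.det ≤ r^N * (Real.sqrt π ^ N / Real.Gamma (N/2+1))) :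
    ∃ v : Fin N → ℤ, v ≠ 0 ∧
      (fun i => (v i : ℝ)) ⬝ᵥ A.mulVec (fun i => (v i : ℝ)) ≤ r^2 := by
  haveI : Nonempty (Fin N) := Fin.pos_iff_nonempty.mp hN
  classical
  set B := (open scoped MatrixOrder in CFC.sqrt A) with hBdef
  have hB : B.PosSemidef := open scoped MatrixOrder in (CFC.sqrt_nonneg A).posSemidef
  have hBB : B * B = A := open scoped MatrixOrder in CFC.sqrt_mul_sqrt_self A hA.posSemidef.nonneg
  have hdet2 : B.det * B.det = A.det := by rw [← det_mul, hBB]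
  have hAdet : 0 < A.det := hA.det_pos
  have hdet_ne : B.det ≠ 0 := by
    intro h; rw [h, mul_zero] at hdet2; exact hAdet.ne hdet2
  have habs : |B.det| = Real.sqrt A.det := by
    rw [← hdet2, ← sq]; exact (Real.sqrt_sq_eq_abs B.det).symm
  have hBsymm : Bᵀ = B := hB.isHermitian.eq
  -- quadratic form identity
  have hquad : ∀ x : Fin N → ℝ, x ⬝ᵥ A.mulVec x = (B.mulVec x) ⬝ᵥ (B.mulVec x) := by
    intro x
    rw [← hBB, ← Matrix.mulVec_mulVec, Matrix.dotProduct_mulVec x B (B.mulVec x),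
      ← Matrix.vecMul_transpose, hBsymm]
  -- the convex body
  have hInv : Invertible B := B.invertibleOfIsUnitDet (Ne.isUnit hdet_ne)
  set gE : (Fin N → ℝ) ≃ₗ[ℝ] EuclideanSpace ℝ (Fin N) :=
    (B.toLinearEquiv' hInv).trans (WithLp.linearEquiv 2 ℝ (Fin N → ℝ)).symm with hgEdef
  set s₀ : Set (Fin N → ℝ) := ⇑gE ⁻¹' (Metric.closedBall 0 r) with hs₀def
  have hmem : ∀ x : Fin N → ℝ, x ∈ s₀ ↔ x ⬝ᵥ A.mulVec x ≤ r^2 := by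
    intro x
    have hgx : ∀ i, (gE x) i = B.mulVec x i := fun i => rfl
    rw [hs₀def]
    simp only [Set.mem_preimage, Metric.mem_closedBall, dist_zero_right]
    rw [EuclideanSpace.norm_eq]
    have hsum : ∑ i, ‖gE x i‖^2 = x ⬝ᵥ A.mulVec x := by
      rw [hquad x]
      simp only [hgx, dotProduct, Real.norm_eq_abs, sq_abs]
      exact Finset.sum_congr rfl (fun i _ => (sq (B.mulVec x i)).symm ▸ by ring)
    constructor
    · intro h
      have h2 : (∑ i, ‖gE x i‖^2) ≤ r^2 := by
        rw [← Real.sq_sqrt (Finset.sum_nonneg fun i _ => sq_nonneg _)]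
        exact pow_le_pow_left₀ (Real.sqrt_nonneg _) h 2
      rwa [hsum] at h2
    · intro h
      rw [show r = Real.sqrt (r^2) from (Real.sqrt_sq hr.le).symm]
      exact Real.sqrt_le_sqrt (by rwa [hsum])
  have hconv : Convex ℝ s₀ := (convex_closedBall (0:EuclideanSpace ℝ (Fin N)) r).linear_preimage gE.toLinearMap
  have hsymm : ∀ x ∈ s₀, -x ∈ s₀ := by
    intro x hx
    rw [hs₀def] at hx ⊢
    simp only [Set.mem_preimage, Metric.mem_closedBall, dist_zero_right, map_neg, norm_neg] at hx ⊢
    exact hx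
  have hcpt : IsCompact s₀ := by
    have : s₀ = ⇑gE.symm '' (Metric.closedBall 0 r) := by
      rw [hs₀def, ← LinearEquiv.image_symm_eq_preimage]
    rw [this]
    exact (isCompact_closedBall _ _).image (gE.symm.toLinearMap.continuous_of_finiteDimensional)
  -- the lattice
  set bF := Pi.basisFun ℝ (Fin N) with hbFdef
  set L : AddSubgroup (Fin N → ℝ) := (Submodule.span ℤ (Set.range ⇑bF)).toAddSubgroup with hLdef
  haveI : DiscreteTopology L := inferInstance
  haveI : Countable L := by
    exact (inferInstance : Countable (Submodule.span ℤ (Set.range ⇑bF)))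
  have fund := ZSpan.isAddFundamentalDomain' bF volume
  -- volume of fundamental domain
  have hfundvol : volume (ZSpan.fundamentalDomain bF) = 1 := by
    rw [ZSpan.volume_fundamentalDomain]
    have : Matrix.of ⇑bF = (1 : Matrix (Fin N) (Fin N) ℝ) := by
      ext i j
      simp [hbFdef, Pi.basisFun_apply, Pi.single_apply, Matrix.one_apply, eq_comm]
    rw [this, Matrix.det_one]
    norm_num
  -- the volume of the body
  set c : ℝ := Real.sqrt π ^ N / Real.Gamma (N/2+1) with hcdef
  have hΓ : 0 < Real.Gamma (N/2+1) := Real.Gamma_pos_of_pos (by positivity)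
  have hc : 0 < c := by
    rw [hcdef]
    have : (0:ℝ) < Real.sqrt π := Real.sqrt_pos.mpr pi_pos
    positivity
  have hs₁ : s₀ = (Matrix.toLin' B) ⁻¹'
      ((WithLp.toLp 2 : (Fin N → ℝ) → EuclideanSpace ℝ (Fin N)) ⁻¹' (Metric.closedBall 0 r)) := rfl
  have hdetlin : LinearMap.det (Matrix.toLin' B) ≠ 0 := by
    rwa [LinearMap.det_toLin']
  have hvol₀ : volume s₀ = ENNReal.ofReal (|B.det|⁻¹ * (r^N * c)) := by
    rw [hs₁, Measure.addHaar_preimage_linearMap volume hdetlin]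
    rw [(PiLp.volume_preserving_toLp (Fin N)).measure_preimage
      measurableSet_closedBall.nullMeasurableSet]
    rw [EuclideanSpace.volume_closedBall]
    rw [LinearMap.det_toLin', abs_inv]
    simp only [Fintype.card_fin]
    rw [← hcdef, ← ENNReal.ofReal_pow hr.le, ← ENNReal.ofReal_mul (by positivity),
      ← ENNReal.ofReal_mul (by positivity)]
  -- volume inequality
  have hsqd : (0:ℝ) < Real.sqrt A.det := Real.sqrt_pos.mpr hAdet
  have hreal : (2:ℝ)^N ≤ |B.det|⁻¹ * (r^N * c) := by
    rw [habs, inv_mul_eq_div, le_div_iff₀ hsqd]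
    linarith [hvol]
  have hle : volume (ZSpan.fundamentalDomain bF) * 2 ^ finrank ℝ (Fin N → ℝ) ≤ volume s₀ := by
    rw [hfundvol, one_mul, hvol₀]
    have hrank : finrank ℝ (Fin N → ℝ) = N := by
      simp [finrank_fintype_fun_eq_card]
    rw [hrank, show ((2:ℝ≥0∞)^N) = ENNReal.ofReal ((2:ℝ)^N) by
      rw [ENNReal.ofReal_pow (by norm_num)]; norm_num]
    exact ENNReal.ofReal_le_ofReal hreal
  obtain ⟨x, hx0, hxs⟩ :=
    exists_ne_zero_mem_lattice_of_measure_mul_two_pow_le_measure fund hsymm hconv hcpt hle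
  have hxmem : (x : Fin N → ℝ) ∈ Submodule.span ℤ (Set.range ⇑bF) := x.2
  rw [Basis.mem_span_iff_repr_mem] at hxmem
  choose v hv using hxmem
  have hvx : ∀ i, (v i : ℝ) = (x : Fin N → ℝ) i := by
    intro i
    simpa [hbFdef] using hv i
  refine ⟨v, ?_, ?_⟩
  · intro h0
    apply hx0
    have : (x : Fin N → ℝ) = 0 := by
      funext i
      rw [← hvx i, h0]
      simp
    exact Subtype.ext this
  · have hfun : (fun i => (v i : ℝ)) = (x : Fin N → ℝ) := funext hvx
    rw [hfun]
    exact (hmem _).mp hxs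

theorem stmt_13 {N : ℕ} (hN : 1 ≤ N) (γ : ℝ)
    (hγ : IsLUB {r : ℝ | ∃ A : Matrix (Fin N) (Fin N) ℝ, A.PosDef ∧ ∃ m : ℝ,
        IsLeast {q : ℝ | ∃ v : Fin N → ℤ, v ≠ 0 ∧
          (fun i => (v i : ℝ)) ⬝ᵥ A.mulVec (fun i => (v i : ℝ)) = q} m ∧
        r = m * A.det ^ (-(1 : ℝ) / N)} γ) :
    γ ≤ 1 + (N : ℝ) / 4 := by
  apply hγ.2
  rintro ρ ⟨A, hA, m, hm, rfl⟩
  have hNR : (0:ℝ) < N := by exact_mod_cast hN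
  have hNne : (N:ℝ) ≠ 0 := hNR.ne'
  set d : ℝ := A.det with hddef
  have hd : 0 < d := hA.det_pos
  have hsd : 0 < Real.sqrt d := Real.sqrt_pos.mpr hd
  have hΓ : 0 < Real.Gamma (N/2+1) := Real.Gamma_pos_of_pos (by positivity)
  set c : ℝ := Real.sqrt π ^ N / Real.Gamma (N/2+1) with hcdef
  have hsπ : (0:ℝ) < Real.sqrt π := Real.sqrt_pos.mpr pi_pos
  have hc : 0 < c := by positivity
  set r : ℝ := 2 * (Real.sqrt d / c) ^ ((1:ℝ)/N) with hrdef
  have hr : 0 < r := by positivity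
  have hrN : r^N = 2^N * (Real.sqrt d / c) := by
    rw [hrdef, mul_pow, ← Real.rpow_natCast ((Real.sqrt d / c) ^ ((1:ℝ)/N)) N,
      ← Real.rpow_mul (by positivity), show (1:ℝ)/N*N = 1 by field_simp, Real.rpow_one]
  have hvol : 2^N * Real.sqrt d ≤ r^N * c := by
    rw [hrN]
    rw [mul_assoc, div_mul_cancel₀ _ hc.ne']
  obtain ⟨v, hv0, hvle⟩ := exists_short_vec hN A hA r hr hvol
  have hmle : m ≤ r^2 := le_trans (hm.2 ⟨v, hv0, rfl⟩) hvle
  -- r^2 in rpow form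
  have hr2 : r^2 = 4 * (Real.sqrt d / c) ^ ((2:ℝ)/N) := by
    rw [hrdef, mul_pow, ← Real.rpow_natCast ((Real.sqrt d / c) ^ ((1:ℝ)/N)) 2,
      ← Real.rpow_mul (by positivity)]
    norm_num
    rw [show ((N:ℝ))⁻¹*2 = 2/N by ring]
  -- collapse determinant powers
  have hE : (Real.sqrt d / c) ^ ((2:ℝ)/N) * d ^ (-(1:ℝ)/N) = (c ^ ((2:ℝ)/N))⁻¹ := by
    rw [Real.div_rpow hsd.le hc.le, Real.sqrt_eq_rpow, ← Real.rpow_mul hd.le,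
      show (1:ℝ)/2*(2/N) = 1/N by ring, div_mul_eq_mul_div, ← Real.rpow_add hd,
      show (1:ℝ)/N + -(1:ℝ)/N = 0 by ring, Real.rpow_zero, one_div]
  -- Gamma bound
  have hkey := keyGamma N hN
  have hR : (0:ℝ) < π*(N+4)/16 := by positivity
  have hΓ2 : Real.Gamma (N/2+1) ^ ((2:ℝ)/N) ≤ π*(N+4)/16 := by
    have h1 := Real.rpow_le_rpow (by positivity) hkey (by positivity : (0:ℝ) ≤ 1/N)
    rwa [← Real.rpow_natCast (Real.Gamma (N/2+1)) 2, ← Real.rpow_mul hΓ.le,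
      ← Real.rpow_natCast (π*(N+4)/16) N, ← Real.rpow_mul hR.le,
      show ((2:ℕ):ℝ)*(1/N) = 2/N by push_cast; ring,
      show (N:ℝ)*(1/N) = 1 by field_simp, Real.rpow_one] at h1
  have hc2 : c ^ ((2:ℝ)/N) = π / Real.Gamma (N/2+1) ^ ((2:ℝ)/N) := by
    rw [hcdef, Real.div_rpow (by positivity) hΓ.le]
    congr 1
    rw [← Real.rpow_natCast (Real.sqrt π) N, ← Real.rpow_mul hsπ.le,
      show (N:ℝ)*(2/N) = 2 by field_simp, Real.sqrt_eq_rpow, ← Real.rpow_mul pi_pos.le]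
    norm_num
  have hcN : (16:ℝ)/(N+4) ≤ c ^ ((2:ℝ)/N) := by
    rw [hc2, show (16:ℝ)/(N+4) = π / (π*(N+4)/16) by field_simp]
    exact div_le_div_of_nonneg_left pi_pos.le (by positivity) hΓ2
  have hfinal : 4 * (c ^ ((2:ℝ)/N))⁻¹ ≤ 1 + (N:ℝ)/4 := by
    have hpos : (0:ℝ) < 16/((N:ℝ)+4) := by positivity
    have := inv_anti₀ hpos hcN
    rw [show ((16:ℝ)/((N:ℝ)+4))⁻¹ = ((N:ℝ)+4)/16 by field_simp] at this
    nlinarith [this]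
  have hdp : (0:ℝ) < d ^ (-(1:ℝ)/N) := Real.rpow_pos_of_pos hd _
  calc m * d ^ (-(1:ℝ)/N) ≤ r^2 * d ^ (-(1:ℝ)/N) := by
        exact mul_le_mul_of_nonneg_right hmle hdp.le
    _ = 4 * ((Real.sqrt d / c) ^ ((2:ℝ)/N) * d ^ (-(1:ℝ)/N)) := by rw [hr2]; ring
    _ = 4 * (c ^ ((2:ℝ)/N))⁻¹ := by rw [hE]
    _ ≤ 1 + (N:ℝ)/4 := hfinal
end

section
/- Let A be a positive definite real N×N symmetric matrix whose set m(A) of minimal vectors spans ℝ^N and with μ(A) = 1. Then there exists a basis (e_1, ..., e_N) of the lattice ℤ^N such that eᵢᵀAeᵢ ≤ N² for all i. -/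
open scoped Matrix

set_option maxHeartbeats 2000000 in
theorem stmt_14 {N : ℕ} (A : Matrix (Fin N) (Fin N) ℝ) (hA : A.PosDef)
    (hmin : IsLeast {q : ℝ | ∃ v : Fin N → ℤ, v ≠ 0 ∧
      (fun i => (v i : ℝ)) ⬝ᵥ A.mulVec (fun i => (v i : ℝ)) = q} 1)
    (hspan : Submodule.span ℝ {x : Fin N → ℝ | ∃ v : Fin N → ℤ, v ≠ 0 ∧
      (fun i => (v i : ℝ)) ⬝ᵥ A.mulVec (fun i => (v i : ℝ)) = 1 ∧
      x = fun i => (v i : ℝ)} = ⊤) :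
    ∃ e : Module.Basis (Fin N) ℤ (Fin N → ℤ),
      ∀ i, (fun j => ((e i : Fin N → ℤ) j : ℝ)) ⬝ᵥ
        A.mulVec (fun j => ((e i : Fin N → ℤ) j : ℝ)) ≤ (N : ℝ) ^ 2 := by
  classical
  rcases Nat.eq_zero_or_pos N with h0 | hNpos
  · subst h0
    exact ⟨Pi.basisFun ℤ (Fin 0), fun i => i.elim0⟩
  -- the cast map
  set S : Set (Fin N → ℝ) := {x : Fin N → ℝ | ∃ v : Fin N → ℤ, v ≠ 0 ∧
      (fun i => (v i : ℝ)) ⬝ᵥ A.mulVec (fun i => (v i : ℝ)) = 1 ∧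
      x = fun i => (v i : ℝ)} with hS
  let cst : (Fin N → ℤ) →ₗ[ℤ] (Fin N → ℝ) :=
    { toFun := fun v j => (v j : ℝ)
      map_add' := fun x y => by funext j; simp
      map_smul' := fun m x => by funext j; simp }
  have cst_inj : Function.Injective cst := by
    intro x y hxy
    funext j
    have : ((x j : ℝ)) = (y j : ℝ) := congrFun hxy j
    exact_mod_cast this
  -- extract a basis of ℝ^N consisting of elements of S
  obtain ⟨t, htS, htspan, htli⟩ := exists_linearIndependent ℝ S
  rw [hspan] at htspan
  let b0 : Module.Basis t ℝ (Fin N → ℝ) := Module.Basis.mk htli (by rw [Subtype.range_coe, htspan])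
  let eqv : t ≃ Fin N := b0.indexEquiv (Pi.basisFun ℝ (Fin N))
  let b : Module.Basis (Fin N) ℝ (Fin N → ℝ) := b0.reindex eqv
  have hbS : ∀ i, b i ∈ S := by
    intro i
    have : b i = b0 (eqv.symm i) := b0.reindex_apply eqv i
    rw [this]
    have : b0 (eqv.symm i) = ((eqv.symm i : t) : Fin N → ℝ) := Module.Basis.mk_apply htli _ _
    rw [this]
    exact htS (eqv.symm i).2
  have hbu : ∀ i : Fin N, ∃ u : Fin N → ℤ,
      cst u ⬝ᵥ A.mulVec (cst u) = 1 ∧ b i = cst u := by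
    intro i
    obtain ⟨u, _, hq, he⟩ := hbS i
    exact ⟨u, hq, he⟩
  choose u hu hbu using hbu
  -- the matrix whose columns are the u's
  set W' : Matrix (Fin N) (Fin N) ℤ := fun k j => u j k with hW'
  set W : Matrix (Fin N) (Fin N) ℝ := W'.map (Int.cast) with hW
  have hWrepr : ∀ x : Fin N → ℝ, W *ᵥ (b.repr x) = x := by
    intro x
    have hx := b.sum_repr x
    funext k
    rw [← congrFun hx k]
    simp only [Matrix.mulVec, dotProduct, hW, Matrix.map_apply, hW']
    rw [Finset.sum_apply]
    congr 1
    funext j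
    rw [hbu j]
    simp [cst, mul_comm]
    exact Or.inl rfl
  -- W is the change-of-basis matrix, hence invertible
  have hWdet : W.det ≠ 0 := by
    have hWb : W = (Pi.basisFun ℝ (Fin N)).toMatrix b := by
      funext k j
      simp [Module.Basis.toMatrix_apply, hW, hW', hbu j, cst]
      rfl
    rw [hWb]
    letI := (Pi.basisFun ℝ (Fin N)).invertibleToMatrix b
    exact (Matrix.isUnit_det_of_invertible _).ne_zero
  have hdetcast : ((W'.det : ℤ) : ℝ) = W.det := by
    rw [hW]
    exact (RingHom.map_det (Int.castRingHom ℝ) W').symm ▸ rfl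
  have hW'det : W'.det ≠ 0 := by
    intro h
    apply hWdet
    rw [← hdetcast, h]; simp
  -- the integer-valued coordinate functionals
  let φ : Fin N → ((Fin N → ℤ) →ₗ[ℤ] ℤ) := fun i =>
    (LinearMap.proj i).comp (Matrix.mulVecLin (W'.adjugate))
  have hφ : ∀ (i : Fin N) (x : Fin N → ℤ),
      ((φ i x : ℤ) : ℝ) = W.det * b.repr (cst x) i := by
    intro i x
    have h1 : W.adjugate *ᵥ (cst x) = W.det • (b.repr (cst x)) := by
      conv_lhs => rw [← hWrepr (cst x)]
      rw [Matrix.mulVec_mulVec, Matrix.adjugate_mul, Matrix.smul_mulVec,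
        Matrix.one_mulVec]
    have h2 : (W'.adjugate).map (Int.cast) *ᵥ (cst x) = W.adjugate *ᵥ (cst x) := by
      have h := RingHom.map_adjugate (Int.castRingHom ℝ) W'
      rw [RingHom.mapMatrix_apply, RingHom.mapMatrix_apply, Int.coe_castRingHom] at h
      rw [hW]
      have h2 := congrArg (fun M => M *ᵥ cst x) h.symm
      convert h2 using 2
    have h3 : ((φ i x : ℤ) : ℝ) = ((W'.adjugate).map (Int.cast) *ᵥ (cst x)) i := by
      simp only [φ, LinearMap.comp_apply, LinearMap.proj_apply, Matrix.mulVecLin_apply]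
      simp [Matrix.mulVec, dotProduct, cst]
    rw [h3, h2, h1]
    simp
  -- the chain of submodules
  let Pn : ℕ → Submodule ℤ (Fin N → ℤ) := fun n =>
    Submodule.comap cst ((Submodule.span ℝ (b '' {j : Fin N | (j : ℕ) < n})).restrictScalars ℤ)
  have hPn_mem : ∀ (n : ℕ) (x : Fin N → ℤ),
      x ∈ Pn n ↔ cst x ∈ Submodule.span ℝ (b '' {j : Fin N | (j : ℕ) < n}) := fun n x => Iff.rfl
  have hPn_repr : ∀ (n : ℕ) (x : Fin N → ℤ), x ∈ Pn n →
      ∀ k : Fin N, ¬ ((k : ℕ) < n) → b.repr (cst x) k = 0 := by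
    intro n x hx k hk
    rw [hPn_mem, b.mem_span_image] at hx
    by_contra h
    exact hk (hx (Finsupp.mem_support_iff.mpr h))
  have hPn_repr' : ∀ (n : ℕ) (x : Fin N → ℤ),
      (∀ k : Fin N, ¬ ((k : ℕ) < n) → b.repr (cst x) k = 0) → x ∈ Pn n := by
    intro n x hx
    rw [hPn_mem, b.mem_span_image]
    intro k hk
    rw [Finset.mem_coe, Finsupp.mem_support_iff] at hk
    by_contra h
    exact hk (hx k h)
  have hu_mem : ∀ (k : Fin N) (n : ℕ), (k : ℕ) < n → u k ∈ Pn n := by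
    intro k n hkn
    rw [hPn_mem, ← hbu k]
    exact Submodule.subset_span ⟨k, hkn, rfl⟩
  have hφu : ∀ i k : Fin N, φ i (u k) = if k = i then W'.det else 0 := by
    intro i k
    have h := hφ i (u k)
    rw [← hbu k] at h
    apply Int.cast_injective (α := ℝ)
    rw [h]
    rw [b.repr_self k]
    rcases eq_or_ne k i with rfl | hne
    · simp [hdetcast]
    · simp [Finsupp.single_apply, hne]
  -- choose generators of the coefficient ideals
  have Hgen : ∀ i : Fin N, ∃ g : ℤ, ∃ x, x ∈ Pn ((i : ℕ) + 1) ∧ φ i x = g ∧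
      (∀ y ∈ Pn ((i : ℕ) + 1), ∃ m : ℤ, φ i y = m * g) := by
    intro i
    let J : Ideal ℤ := Submodule.map (φ i) (Pn ((i : ℕ) + 1))
    obtain ⟨x, hxP, hxg⟩ := Submodule.mem_map.mp (Submodule.IsPrincipal.generator_mem J)
    refine ⟨Submodule.IsPrincipal.generator J, x, hxP, hxg, ?_⟩
    intro y hy
    obtain ⟨m, hm⟩ := Submodule.IsPrincipal.mem_iff_eq_smul_generator J |>.mp
      (Submodule.mem_map_of_mem hy)
    exact ⟨m, by simpa [smul_eq_mul] using hm⟩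
  choose a e' he'P he'a hgen using Hgen
  -- the reduced basis vectors
  let e : Fin N → (Fin N → ℤ) := fun i =>
    e' i - ∑ k ∈ Finset.Iio i, round (b.repr (cst (e' i)) k) • u k
  have he_mem : ∀ i : Fin N, e i ∈ Pn ((i : ℕ) + 1) := by
    intro i
    refine Submodule.sub_mem _ (he'P i) (Submodule.sum_mem _ ?_)
    intro k hk
    refine Submodule.smul_mem _ _ (hu_mem k _ ?_)
    exact Nat.lt_succ_of_lt (Fin.lt_iff_val_lt_val.mp (Finset.mem_Iio.mp hk))
  have hφe : ∀ i, φ i (e i) = a i := by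
    intro i
    have h1 : φ i (e i) = φ i (e' i) -
        ∑ k ∈ Finset.Iio i, round (b.repr (cst (e' i)) k) * φ i (u k) := by
      show φ i (e' i - ∑ k ∈ Finset.Iio i, round (b.repr (cst (e' i)) k) • u k) = _
      rw [map_sub, map_sum]
      congr 1
      refine Finset.sum_congr rfl fun k _ => ?_
      rw [map_zsmul, smul_eq_mul]
    rw [h1, he'a, Finset.sum_eq_zero, sub_zero]
    intro k hk
    rw [hφu]
    have hne : k ≠ i := ne_of_lt (Finset.mem_Iio.mp hk)
    simp [hne]
  -- representation coefficients of e i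
  set r : Fin N → Fin N → ℝ := fun i k => b.repr (cst (e i)) k with hr
  have hr_zero : ∀ i k : Fin N, ¬ ((k : ℕ) < (i : ℕ) + 1) → r i k = 0 := by
    intro i k hk
    exact hPn_repr _ _ (he_mem i) k hk
  have hr_diag : ∀ i : Fin N, |r i i| ≤ 1 := by
    intro i
    have h1 : W.det * r i i = (a i : ℝ) := by
      have h := hφ i (e i)
      rw [hφe i] at h
      exact h.symm
    obtain ⟨m, hm'⟩ := hgen i (u i) (hu_mem i _ (Nat.lt_succ_self _))
    rw [hφu] at hm'
    have hm : W'.det = m * a i := by simpa using hm'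
    have hm0 : m ≠ 0 := by
      intro h; rw [h, zero_mul] at hm; exact hW'det hm
    have ha0 : |(a i : ℝ)| ≤ |W.det| := by
      rw [← hdetcast, ← Int.cast_abs, ← Int.cast_abs, Int.cast_le]
      calc |a i| = 1 * |a i| := (one_mul _).symm
      _ ≤ |m| * |a i| := by
        apply mul_le_mul_of_nonneg_right _ (abs_nonneg _)
        exact Int.one_le_abs hm0
      _ = |W'.det| := by rw [← abs_mul, ← hm]
    have hWpos : 0 < |W.det| := abs_pos.mpr hWdet
    have h2 : |W.det| * |r i i| = |(a i : ℝ)| := by rw [← abs_mul, h1]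
    nlinarith [h2, ha0, hWpos, abs_nonneg (r i i)]
  have hr_low : ∀ i k : Fin N, k < i → |r i k| ≤ 1 / 2 := by
    intro i k hki
    have hcst : cst (e i) = cst (e' i) -
        ∑ j ∈ Finset.Iio i, (round (b.repr (cst (e' i)) j) : ℝ) • b j := by
      simp only [e, map_sub, map_sum, map_zsmul]
      congr 1
      refine Finset.sum_congr rfl fun j _ => ?_
      rw [hbu j, ← Int.cast_smul_eq_zsmul ℝ]
    have hrk : r i k = b.repr (cst (e' i)) k - round (b.repr (cst (e' i)) k) := by
      rw [hr]
      simp only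
      rw [hcst, map_sub, map_sum]
      simp only [Finsupp.coe_sub, Pi.sub_apply]
      congr 1
      rw [Finsupp.finset_sum_apply]
      have : ∀ j ∈ Finset.Iio i, ((b.repr ((round (b.repr (cst (e' i)) j) : ℝ) • b j)) k)
          = if j = k then (round (b.repr (cst (e' i)) j) : ℝ) else 0 := by
        intro j _
        rw [map_smul, b.repr_self j]
        simp [Finsupp.single_apply]
      rw [Finset.sum_congr rfl this, Finset.sum_ite_eq' (Finset.Iio i) k
        (fun j => (round (b.repr (cst (e' i)) j) : ℝ))]
      simp [Finset.mem_Iio.mpr hki]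
    rw [hrk]
    exact abs_sub_round _
  have hr_le : ∀ i k : Fin N, |r i k| ≤ 1 := by
    intro i k
    rcases lt_trichotomy k i with h | h | h
    · linarith [hr_low i k h]
    · rw [h]; exact hr_diag i
    · rw [hr_zero i k (by
        have := Fin.lt_iff_val_lt_val.mp h
        omega)]
      norm_num
  -- the e's span the whole lattice
  have hspanE : ∀ n : ℕ, Pn n ≤ Submodule.span ℤ (Set.range e) := by
    intro n
    induction n with
    | zero =>
      intro x hx
      rw [hPn_mem] at hx
      have h0 : cst x = 0 := by
        have : {j : Fin N | (j : ℕ) < 0} = (∅ : Set (Fin N)) := by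
          ext j; simp
        rw [this] at hx
        simpa using hx
      have : x = 0 := cst_inj (by rw [h0, map_zero])
      rw [this]; exact Submodule.zero_mem _
    | succ n ih =>
      by_cases hnN : n < N
      · set i : Fin N := ⟨n, hnN⟩ with hi
        intro x hx
        have hx' : x ∈ Pn ((i : ℕ) + 1) := hx
        obtain ⟨m, hm⟩ := hgen i x hx'
        have hy : x - m • e i ∈ Pn ((i : ℕ) + 1) :=
          Submodule.sub_mem _ hx' (Submodule.smul_mem _ _ (he_mem i))
        have hyφ : φ i (x - m • e i) = 0 := by
          rw [map_sub, map_zsmul, hφe i, smul_eq_mul, hm, sub_self]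
        have hyP : x - m • e i ∈ Pn n := by
          apply hPn_repr' n
          intro k hk
          by_cases hk' : (k : ℕ) < n + 1
          · have hkn : (k : ℕ) = n := by omega
            have hki : k = i := by
              apply Fin.ext; rw [hkn]
            rw [hki]
            have := hφ i (x - m • e i)
            rw [hyφ] at this
            have h0 : W.det * (b.repr (cst (x - m • e i))) i = 0 := by
              simpa using this.symm
            exact (mul_eq_zero.mp h0).resolve_left hWdet
          · exact hPn_repr (n + 1) _ hy k hk'
        have := ih hyP
        have hxe : x = (x - m • e i) + m • e i := by ring
        rw [hxe]
        exact Submodule.add_mem _ this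
          (Submodule.smul_mem _ _ (Submodule.subset_span ⟨i, rfl⟩))
      · intro x hx
        apply ih
        apply hPn_repr' n
        intro k hk
        exact absurd (show (k : ℕ) < n by have := k.isLt; omega) hk
  have hspanTop : ∀ x : Fin N → ℤ, x ∈ Submodule.span ℤ (Set.range e) := by
    intro x
    apply hspanE N
    rw [hPn_mem]
    have huniv : {j : Fin N | (j : ℕ) < N} = Set.univ :=
      Set.eq_univ_of_forall fun j => j.isLt
    rw [huniv, Set.image_univ, b.span_eq]
    trivial
  -- build the basis
  let f : (Fin N → ℤ) →ₗ[ℤ] (Fin N → ℤ) := (Pi.basisFun ℤ (Fin N)).constr ℤ e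
  have hsurj : Function.Surjective f := by
    rw [← LinearMap.range_eq_top, Module.Basis.constr_range]
    exact top_unique fun x _ => hspanTop x
  have hinj : Function.Injective f :=
    OrzechProperty.injective_of_surjective_endomorphism f hsurj
  let E : Module.Basis (Fin N) ℤ (Fin N → ℤ) :=
    (Pi.basisFun ℤ (Fin N)).map (LinearEquiv.ofBijective f ⟨hinj, hsurj⟩)
  have hE : ∀ i, E i = e i := by
    intro i
    show (LinearEquiv.ofBijective f ⟨hinj, hsurj⟩) ((Pi.basisFun ℤ (Fin N)) i) = e i
    show f ((Pi.basisFun ℤ (Fin N)) i) = e i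
    exact (Pi.basisFun ℤ (Fin N)).constr_basis ℤ e i
  -- the norm estimate via the square root of A
  set Sq := (open scoped MatrixOrder in CFC.sqrt A) with hSdef
  have hSsq : Sq * Sq = A :=
    (open scoped MatrixOrder in CFC.sqrt_mul_sqrt_self A hA.posSemidef.nonneg)
  have hSsym : Sqᵀ = Sq := by
    have h := (open scoped MatrixOrder in (Matrix.nonneg_iff_posSemidef.mp (CFC.sqrt_nonneg A)).1)
    ext i j
    have h2 := congrFun (congrFun h i) j
    simpa [Matrix.conjTranspose_apply] using h2
  have hquad : ∀ x y : Fin N → ℝ, x ⬝ᵥ A.mulVec y = (Sq *ᵥ x) ⬝ᵥ (Sq *ᵥ y) := by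
    intro x y
    rw [← hSsq, ← Matrix.mulVec_mulVec, Matrix.dotProduct_mulVec, ← Matrix.mulVec_transpose,
      hSsym]
  let g : (Fin N → ℝ) →ₗ[ℝ] EuclideanSpace ℝ (Fin N) :=
    (WithLp.linearEquiv 2 ℝ (Fin N → ℝ)).symm.toLinearMap ∘ₗ Matrix.mulVecLin Sq
  have hgnorm : ∀ x : Fin N → ℝ, ‖g x‖ ^ 2 = x ⬝ᵥ A.mulVec x := by
    intro x
    rw [hquad]
    rw [EuclideanSpace.norm_eq, Real.sq_sqrt (by positivity)]
    simp [g, dotProduct, Real.norm_eq_abs, sq_abs, sq, WithLp.linearEquiv,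
      Matrix.mulVecLin_apply]
  refine ⟨E, ?_⟩
  intro i
  have hEe : (fun j => ((E i : Fin N → ℤ) j : ℝ)) = cst (e i) := by rw [hE i]; rfl
  rw [hEe]
  have hgb : ∀ k, ‖g (b k)‖ = 1 := by
    intro k
    have h1 : ‖g (b k)‖ ^ 2 = 1 := by rw [hgnorm, hbu k]; exact hu k
    nlinarith [norm_nonneg (g (b k))]
  have hnorm : ‖g (cst (e i))‖ ≤ (N : ℝ) := by
    have hrepr : cst (e i) = ∑ k, r i k • b k := (b.sum_repr (cst (e i))).symm
    calc ‖g (cst (e i))‖ = ‖∑ k, r i k • g (b k)‖ := by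
          rw [hrepr, map_sum]
          simp_rw [map_smul]
      _ ≤ ∑ k, ‖r i k • g (b k)‖ := norm_sum_le _ _
      _ = ∑ k, |r i k| := by
          refine Finset.sum_congr rfl fun k _ => ?_
          rw [norm_smul, hgb k, mul_one, Real.norm_eq_abs]
      _ ≤ ∑ _k : Fin N, (1 : ℝ) := Finset.sum_le_sum fun k _ => hr_le i k
      _ = N := by simp
  have hval := hgnorm (cst (e i))
  nlinarith [hnorm, norm_nonneg (g (cst (e i))), hval]
end
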